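/- Fix n ∈ ℕ, ε > 0 and K ≥ 2^n·ε, and let (P, v) be the packing game of the instability construction with weights w. Then every allocation z : P → ℝ in the core of (P, v) (i.e., z(P) = v(P) and z(S) ≥ v(S) for all S ⊆ P) satisfies z(p_i^{(l)}) + z(q_i^{(l)}) = 2·l·K for all l ∈ {1,…,n+2} and i ∈ {1,…,4}. -/

import Mathlib

/-- The players of the instability construction: a root `r`, and players `p i (l)`,
`q i (l)` for levels `l ∈ {1, …, n+2}` (encoded by `Fin (n+2)`, level `= l.1 + 1`) and
`i ∈ {1, …, 4}`. -/
inductive Player (n : ℕ) : Type where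
  | r : Player n
  | p : Fin (n + 2) → Fin 4 → Player n
  | q : Fin (n + 2) → Fin 4 → Player n
  deriving DecidableEq, Fintype

/-- Index set for the family `𝒮` of the instability construction. -/
inductive Idx (n : ℕ) : Type where
  | root : Idx n
  | rootP : Fin 4 → Idx n
  | pair : Fin (n + 2) → Fin 4 → Idx n
  | quad : Fin (n + 1) → Fin 4 → Idx n
  deriving DecidableEq, Fintype

/-- The coalitions of the family `𝒮`: `{r}`; `{r, p_i^{(1)}}`; `{p_i^{(l)}, q_i^{(l)}}`;
and `{q_1^{(l)}, q_2^{(l)}, q_3^{(l)}, q_4^{(l)}, p_i^{(l+1)}}`. -/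
def coal {n : ℕ} : Idx n → Finset (Player n)
  | .root => {Player.r}
  | .rootP i => {Player.r, Player.p 0 i}
  | .pair l i => {Player.p l i, Player.q l i}
  | .quad l i => {Player.q l.castSucc 0, Player.q l.castSucc 1, Player.q l.castSucc 2,
      Player.q l.castSucc 3, Player.p l.succ i}

/-- The weights of the family `𝒮`: `rootW` on `{r}` (which is `1` for `w` and `1 − ε` for
`w̃`); `1` on `{r, p_i^{(1)}}`; `2·l·K` on `{p_i^{(l)}, q_i^{(l)}}`; and `4·l·K` on
`{q_1^{(l)}, …, q_4^{(l)}, p_i^{(l+1)}}`. -/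
noncomputable def wt {n : ℕ} (K rootW : ℝ) : Idx n → ℝ
  | .root => rootW
  | .rootP _ => 1
  | .pair l _ => 2 * ((l.1 : ℝ) + 1) * K
  | .quad l _ => 4 * ((l.1 : ℝ) + 1) * K

/-- The packing game of the instability construction: `packV n K rootW S` is the maximum
total weight of a packing of pairwise disjoint members of `𝒮` inside `S` (the empty
packing is allowed). -/
noncomputable def packV (n : ℕ) (K rootW : ℝ) (S : Finset (Player n)) : ℝ :=
  ((Finset.univ : Finset (Idx n)).powerset.filter (fun F =>
      (∀ j ∈ F, coal j ⊆ S) ∧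
      ∀ j ∈ F, ∀ j' ∈ F, j ≠ j' → Disjoint (coal j) (coal j'))).sup'
    ⟨∅, by simp⟩ (fun F => ∑ j ∈ F, wt K rootW j)

/-!
The blocks `{r}` and `{p_i^{(l)}, q_i^{(l)}}` partition `P`, and for `K ≥ 0` their total
weight equals the cost of the fractional cover `y_r = 1`, `y_{p_i^{(l)}} = y_{q_i^{(l)}} = l·K`
of `𝒮`; by weak LP duality this partition is an optimal packing. For a block `T`, a core
allocation has `z(T) ≥ v(T)`, `z(Tᶜ) ≥ v(Tᶜ)` and `z(T) + z(Tᶜ) = v(P) ≤ v(T) + v(Tᶜ)`, which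
forces `z(T) = v(T) = 2·l·K`.
-/

open Finset

def InCore {α : Type*} [Fintype α] (v : Finset α → ℝ) (z : α → ℝ) : Prop :=
  ∑ x, z x = v univ ∧ ∀ S, v S ≤ ∑ x ∈ S, z x

theorem InCore.sum_eq_of_le_add {α : Type*} [Fintype α] [DecidableEq α]
    {v : Finset α → ℝ} {z : α → ℝ} (hz : InCore v z) {T : Finset α} {a b : ℝ}
    (ha : a ≤ v T) (hb : b ≤ v Tᶜ) (hab : v univ ≤ a + b) : ∑ x ∈ T, z x = a := by
  have hsplit := sum_add_sum_compl T z
  linarith [hz.1, hz.2 T, hz.2 Tᶜ]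

variable {n : ℕ}

theorem sum_wt_le_packV (K rootW : ℝ) {S : Finset (Player n)} {F : Finset (Idx n)}
    (hS : ∀ j ∈ F, coal j ⊆ S)
    (hF : ∀ j ∈ F, ∀ j' ∈ F, j ≠ j' → Disjoint (coal j) (coal j')) :
    ∑ j ∈ F, wt K rootW j ≤ packV n K rootW S :=
  le_sup' (fun F => ∑ j ∈ F, wt K rootW j)
    (mem_filter.2 ⟨mem_powerset.2 (subset_univ F), hS, hF⟩)

theorem wt_le_packV (K rootW : ℝ) {S : Finset (Player n)} {j : Idx n} (hj : coal j ⊆ S) :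
    wt K rootW j ≤ packV n K rootW S := by
  simpa using sum_wt_le_packV K rootW (F := {j}) (by simpa using hj) (by simp +contextual)

noncomputable def dualPrice (K : ℝ) : Player n → ℝ
  | .r => 1
  | .p l _ => ((l : ℝ) + 1) * K
  | .q l _ => ((l : ℝ) + 1) * K

theorem dualPrice_nonneg {K : ℝ} (hK : 0 ≤ K) (x : Player n) : 0 ≤ dualPrice K x := by
  cases x <;> simp only [dualPrice] <;> positivity

theorem wt_le_sum_dualPrice {K : ℝ} (hK : 0 ≤ K) (j : Idx n) :
    wt K 1 j ≤ ∑ x ∈ coal j, dualPrice K x := by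
  cases j <;> simp [coal, wt, dualPrice, sum_insert, Fin.ext_iff] <;> nlinarith

theorem sum_wt_le_sum_dualPrice {K : ℝ} (hK : 0 ≤ K) {F : Finset (Idx n)}
    (hF : ∀ j ∈ F, ∀ j' ∈ F, j ≠ j' → Disjoint (coal j) (coal j')) :
    ∑ j ∈ F, wt K 1 j ≤ ∑ x : Player n, dualPrice K x :=
  calc ∑ j ∈ F, wt K 1 j ≤ ∑ j ∈ F, ∑ x ∈ coal j, dualPrice K x :=
        sum_le_sum fun j _ => wt_le_sum_dualPrice hK j
    _ = ∑ x ∈ F.biUnion coal, dualPrice K x := (sum_biUnion hF).symm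
    _ ≤ ∑ x : Player n, dualPrice K x :=
        sum_le_sum_of_subset_of_nonneg (subset_univ _) fun x _ _ => dualPrice_nonneg hK x

theorem packV_univ_le_sum_dualPrice {K : ℝ} (hK : 0 ≤ K) :
    packV n K 1 univ ≤ ∑ x : Player n, dualPrice K x :=
  sup'_le _ _ fun _ hF => sum_wt_le_sum_dualPrice hK (mem_filter.1 hF).2.2

def blockOf : Player n → Idx n
  | .r => .root
  | .p l i => .pair l i
  | .q l i => .pair l i

theorem mem_coal_blockOf_iff {x y : Player n} :
    x ∈ coal (blockOf y) ↔ blockOf x = blockOf y := by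
  cases x <;> cases y <;> simp [coal, blockOf]

theorem coal_blockOf (y : Player n) :
    coal (blockOf y) = univ.filter (blockOf · = blockOf y) := by
  ext x
  simp [mem_coal_blockOf_iff]

def optPacking (n : ℕ) : Finset (Idx n) := univ.image blockOf

theorem disjoint_coal_of_mem_optPacking {j j' : Idx n} (hj : j ∈ optPacking n)
    (hj' : j' ∈ optPacking n) (hne : j ≠ j') : Disjoint (coal j) (coal j') := by
  obtain ⟨y, -, rfl⟩ := mem_image.1 hj
  obtain ⟨y', -, rfl⟩ := mem_image.1 hj'
  exact disjoint_left.2 fun x hx hx' =>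
    hne ((mem_coal_blockOf_iff.1 hx).symm.trans (mem_coal_blockOf_iff.1 hx'))

theorem wt_blockOf (K : ℝ) (y : Player n) :
    wt K 1 (blockOf y) = ∑ x ∈ coal (blockOf y), dualPrice K x := by
  cases y <;> simp [blockOf, coal, wt, dualPrice] <;> ring

theorem sum_optPacking_wt (K : ℝ) :
    ∑ j ∈ optPacking n, wt K 1 j = ∑ x : Player n, dualPrice K x :=
  sum_image' _ fun y _ => by rw [wt_blockOf, coal_blockOf]

theorem sum_erase_blockOf_wt_le_packV_compl (K rootW : ℝ) (y : Player n) :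
    ∑ j ∈ (optPacking n).erase (blockOf y), wt K rootW j ≤
      packV n K rootW (coal (blockOf y))ᶜ := by
  refine sum_wt_le_packV K rootW (fun j hj x hx => ?_) fun j hj j' hj' =>
    disjoint_coal_of_mem_optPacking (mem_of_mem_erase hj) (mem_of_mem_erase hj')
  obtain ⟨hjy, hj⟩ := mem_erase.1 hj
  obtain ⟨x', -, rfl⟩ := mem_image.1 hj
  rw [mem_compl, mem_coal_blockOf_iff, mem_coal_blockOf_iff.1 hx]
  exact hjy

/-- Core rigidity in the instability construction: every core allocation `z`
of the packing game `(P, v)` satisfies `z(p_i^{(l)}) + z(q_i^{(l)}) = 2·l·K` for all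
levels `l` and all `i`. -/
theorem stmt15 (n : ℕ) (ε K : ℝ) (hε : 0 < ε) (hK : 2 ^ n * ε ≤ K)
    (z : Player n → ℝ)
    (hzP : (∑ p, z p) = packV n K 1 Finset.univ)
    (hzS : ∀ S : Finset (Player n), packV n K 1 S ≤ ∑ p ∈ S, z p) :
    ∀ (l : Fin (n + 2)) (i : Fin 4),
      z (Player.p l i) + z (Player.q l i) = 2 * ((l.1 : ℝ) + 1) * K := by
  intro l i
  have hK0 : 0 ≤ K := (by positivity : (0 : ℝ) ≤ 2 ^ n * ε).trans hK
  have hz : InCore (packV n K 1) z := ⟨hzP, hzS⟩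
  have hmem : blockOf (Player.p l i) ∈ optPacking n := mem_image_of_mem _ (mem_univ _)
  have hpair := hz.sum_eq_of_le_add (wt_le_packV K 1 subset_rfl)
    (sum_erase_blockOf_wt_le_packV_compl K 1 (Player.p l i))
    (by rw [add_sum_erase _ _ hmem, sum_optPacking_wt]; exact packV_univ_le_sum_dualPrice hK0)
  rwa [show coal (blockOf (Player.p l i)) = {Player.p l i, Player.q l i} from rfl,
    sum_pair (by simp)] at hpair
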